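/- If a commutative real POVM F admits a strong Feller Markov kernel representation F(Δ) = ∫ μ_Δ(λ) dE_λ with respect to a PVM E on a compact set, where λ ↦ μ_Δ(λ) is continuous for every Borel set Δ, then F is uniformly continuous. -/

import Mathlib

open MeasureTheory Filter Topology

local notation "⟪" x ", " y "⟫" => @inner ℂ _ _ x y

variable {H : Type*} [NormedAddCommGroup H] [InnerProductSpace ℂ H] [CompleteSpace H]

/-- A normalized POVM on the Borel sets of `ℝ`. -/
def IsPOVM (F : Set ℝ → H →L[ℂ] H) : Prop :=
  (∀ Δ, MeasurableSet Δ → IsSelfAdjoint (F Δ)) ∧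
  (∀ Δ, MeasurableSet Δ → ∀ x : H, 0 ≤ (⟪x, F Δ x⟫).re) ∧
  (∀ Δ : ℕ → Set ℝ, (∀ i, MeasurableSet (Δ i)) → Pairwise (Function.onFun Disjoint Δ) →
    ∀ x : H, Tendsto (fun n => ∑ i ∈ Finset.range n, ⟪x, F (Δ i) x⟫)
      atTop (𝓝 ⟪x, F (⋃ i, Δ i) x⟫)) ∧
  F Set.univ = 1

/-- Uniform continuity at `Δ`: partial sums of any disjoint decomposition converge
in operator norm. -/
def UnifContAt (F : Set ℝ → H →L[ℂ] H) (Δ : Set ℝ) : Prop :=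
  ∀ Δi : ℕ → Set ℝ, (∀ i, MeasurableSet (Δi i)) → Pairwise (Function.onFun Disjoint Δi) →
    (⋃ i, Δi i) = Δ →
    Tendsto (fun n => ∑ i ∈ Finset.range n, F (Δi i)) atTop (𝓝 (F Δ))


/-!
With the tails `Gₙ = ⋃_{i ≥ n} Δᵢ`, additivity gives `F Δ - ∑_{i<n} F Δᵢ = F Gₙ`. The operator
`F Gₙ` is positive and its quadratic form is `x ↦ ∫_Λ μ_{Gₙ} d⟨x, E(·) x⟩`, an integral against
a measure of mass `‖x‖²`, so `‖F Gₙ‖ ≤ sup_Λ μ_{Gₙ}`. By σ-additivity of each probability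
`μ_(·)(λ)` the continuous functions `μ_{Gₙ}` decrease pointwise to `0`, hence, by Dini's theorem,
uniformly on the compact set `Λ`.
-/

theorem Set.iUnion_nat_add_eq_union {α : Type*} (s : ℕ → Set α) (n : ℕ) :
    ⋃ i, s (i + n) = s n ∪ ⋃ i, s (i + (n + 1)) := by
  rw [← Set.union_iUnion_nat_succ fun i => s (i + n)]
  simp only [zero_add, add_right_comm _ 1 n, add_assoc]

theorem Set.disjoint_iUnion_nat_add_succ {α : Type*} {s : ℕ → Set α}
    (hs : Pairwise (Function.onFun Disjoint s)) (n : ℕ) :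
    Disjoint (s n) (⋃ i, s (i + (n + 1))) :=
  Set.disjoint_iUnion_right.2 fun _ => hs (by omega)

namespace MeasureTheory

theorem tendsto_measure_iUnion_nat_add_zero {α : Type*} [MeasurableSpace α] (m : Measure α)
    [IsFiniteMeasure m] {s : ℕ → Set α} (hs : ∀ i, MeasurableSet (s i))
    (hdisj : Pairwise (Function.onFun Disjoint s)) :
    Tendsto (fun n => m (⋃ i, s (i + n))) atTop (𝓝 0) := by
  have hsum : ∑' i, m (s i) ≠ ⊤ := by
    rw [← measure_iUnion hdisj hs]
    exact measure_ne_top m _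
  exact tendsto_of_tendsto_of_tendsto_of_le_of_le tendsto_const_nhds
    (ENNReal.tendsto_sum_nat_add _ hsum) (fun _ => zero_le) fun _ => measure_iUnion_le _

theorem tendstoUniformlyOn_measureReal_iUnion_nat_add {X α : Type*} [TopologicalSpace X]
    [MeasurableSpace α] {P : X → Measure α} [∀ x, IsFiniteMeasure (P x)] {K : Set X}
    (hK : IsCompact K) {s : ℕ → Set α} (hs : ∀ i, MeasurableSet (s i))
    (hdisj : Pairwise (Function.onFun Disjoint s))
    (hcont : ∀ n, Continuous fun x => (P x).real (⋃ i, s (i + n))) :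
    TendstoUniformlyOn (fun n x => (P x).real (⋃ i, s (i + n))) 0 atTop K := by
  refine Antitone.tendstoUniformlyOn_of_forall_tendsto hK (fun n => (hcont n).continuousOn)
    (fun x _ => antitone_nat_of_succ_le fun n => ?_) continuousOn_const fun x _ => ?_
  · exact measureReal_mono ((Set.iUnion_nat_add_eq_union s n).symm ▸ Set.subset_union_right)
  · simpa [Measure.real, Function.comp_def] using (ENNReal.tendsto_toReal ENNReal.zero_ne_top).comp
      (tendsto_measure_iUnion_nat_add_zero (P x) hs hdisj)

end MeasureTheory

namespace ContinuousLinearMap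

theorem norm_le_of_re_inner_le {T : H →L[ℂ] H} (hT : 0 ≤ T) {c : ℝ} (hc : 0 ≤ c)
    (h : ∀ x, (⟪x, T x⟫).re ≤ c * ‖x‖ ^ 2) : ‖T‖ ≤ c := by
  rw [CStarAlgebra.norm_le_iff_le_algebraMap T hc hT, le_def, isPositive_def']
  refine ⟨(IsSelfAdjoint.algebraMap _ (.of_nonneg hc)).sub hT.isSelfAdjoint, fun x => ?_⟩
  rw [reApplyInnerSelf_apply, inner_re_symm]
  simp only [sub_apply, inner_sub_right, algebraMap_apply, map_sub, inner_smul_right_eq_smul,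
    RCLike.smul_re, inner_self_eq_norm_sq, RCLike.re_to_complex]
  linarith [h x]

theorem norm_le_of_re_inner_eq_setIntegral {α : Type*} [MeasurableSpace α] {T : H →L[ℂ] H}
    (hT : 0 ≤ T) {m : H → Measure α} {Λ : Set α} (hm : ∀ x, m x Λ = ENNReal.ofReal (‖x‖ ^ 2))
    {f : α → ℝ} (hrep : ∀ x, (⟪x, T x⟫).re = ∫ a in Λ, f a ∂(m x)) {c : ℝ} (hc : 0 ≤ c)
    (hf : ∀ a ∈ Λ, ‖f a‖ ≤ c) : ‖T‖ ≤ c := by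
  refine norm_le_of_re_inner_le hT hc fun x => ?_
  calc (⟪x, T x⟫).re ≤ ‖∫ a in Λ, f a ∂(m x)‖ := hrep x ▸ le_abs_self _
    _ ≤ c * (m x).real Λ := norm_setIntegral_le_of_norm_le_const (by simp [hm]) hf
    _ = c * ‖x‖ ^ 2 := by rw [Measure.real, hm, ENNReal.toReal_ofReal (by positivity)]

end ContinuousLinearMap

namespace IsPOVM

variable {F : Set ℝ → H →L[ℂ] H}

theorem inner_map_empty (hF : IsPOVM F) (x : H) : ⟪x, F ∅ x⟫ = 0 := by
  have h := hF.2.2.1 (fun _ => ∅) (fun _ => .empty) (fun _ _ _ => Set.disjoint_empty _) x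
  simp only [Finset.sum_const, Finset.card_range, Set.iUnion_empty] at h
  -- the increments `(n + 1) • c - n • c = c` of convergent partial sums tend to `0`
  simpa [add_smul, tendsto_const_nhds_iff] using ((tendsto_add_atTop_iff_nat 1).2 h).sub h

theorem inner_map_union (hF : IsPOVM F) {A B : Set ℝ} (hA : MeasurableSet A)
    (hB : MeasurableSet B) (hAB : Disjoint A B) (x : H) :
    ⟪x, F (A ∪ B) x⟫ = ⟪x, F A x⟫ + ⟪x, F B x⟫ := by
  set s : ℕ → Set ℝ := fun n => [A, B].getD n ∅
  have hs : ∀ i, MeasurableSet (s i) := by rintro (_ | _ | i) <;> simp [s, hA, hB]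
  have hdisj : Pairwise (Function.onFun Disjoint s) := by
    rintro (_ | _ | i) (_ | _ | j) hij <;> simp_all [s, Function.onFun, hAB.symm]
  have hU : ⋃ i, s i = A ∪ B := by
    rw [← Set.union_iUnion_nat_succ, ← Set.union_iUnion_nat_succ]
    simp [s]
  have h := (tendsto_add_atTop_iff_nat 2).2 (hF.2.2.1 s hs hdisj x)
  simp only [Finset.sum_range_succ', hU] at h
  simpa [s, hF.inner_map_empty, add_comm, tendsto_const_nhds_iff, eq_comm] using h

theorem map_union (hF : IsPOVM F) {A B : Set ℝ} (hA : MeasurableSet A) (hB : MeasurableSet B)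
    (hAB : Disjoint A B) : F (A ∪ B) = F A + F B := by
  refine ContinuousLinearMap.coe_inj.1 ((ext_inner_map _ _).1 fun x => ?_)
  apply (starRingEnd ℂ).injective
  simp [inner_conj_symm, inner_add_left, hF.inner_map_union hA hB hAB]

theorem map_iUnion_eq_sum_add (hF : IsPOVM F) {s : ℕ → Set ℝ} (hs : ∀ i, MeasurableSet (s i))
    (hdisj : Pairwise (Function.onFun Disjoint s)) (n : ℕ) :
    F (⋃ i, s i) = ∑ i ∈ Finset.range n, F (s i) + F (⋃ i, s (i + n)) := by
  induction n with
  | zero => simp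
  | succ n ih =>
    rw [ih, Set.iUnion_nat_add_eq_union,
      hF.map_union (hs n) (.iUnion fun i => hs _) (Set.disjoint_iUnion_nat_add_succ hdisj n),
      Finset.sum_range_succ, add_assoc]

theorem nonneg (hF : IsPOVM F) {S : Set ℝ} (hS : MeasurableSet S) : 0 ≤ F S := by
  rw [ContinuousLinearMap.nonneg_iff_isPositive, ContinuousLinearMap.isPositive_def']
  refine ⟨hF.1 S hS, fun x => ?_⟩
  rw [ContinuousLinearMap.reApplyInnerSelf_apply, inner_re_symm]
  exact hF.2.1 S hS x

end IsPOVM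

theorem unifCont_of_strong_feller_kernel_general (F : Set ℝ → H →L[ℂ] H) (hF : IsPOVM F)
    (Λ : Set ℝ) (hΛ : IsCompact Λ)
    -- the PVM `E`
    (E : Set ℝ → H →L[ℂ] H)
    (hEΛ : E Λ = 1)
    -- the spectral measures `ν x = ⟨x, E(·) x⟩`
    (ν : H → Measure ℝ)
    (hν : ∀ (x : H) (Δ : Set ℝ), MeasurableSet Δ →
      ν x Δ = ENNReal.ofReal ((⟪x, E Δ x⟫).re))
    -- the Markov kernel `μ`
    (μ : Set ℝ → ℝ → ℝ)
    (P : ℝ → Measure ℝ) (hP : ∀ lam : ℝ, IsProbabilityMeasure (P lam))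
    (hμP : ∀ (lam : ℝ) (Δ : Set ℝ), MeasurableSet Δ → μ Δ lam = (P lam Δ).toReal)
    -- the strong Feller property
    (hfeller : ∀ Δ : Set ℝ, MeasurableSet Δ → Continuous (μ Δ))
    -- the smearing representation `F Δ = ∫_Λ μ_Δ(λ) dE_λ`
    (hrep : ∀ (Δ : Set ℝ), MeasurableSet Δ → ∀ x : H,
      (⟪x, F Δ x⟫).re = ∫ lam in Λ, μ Δ lam ∂(ν x)) :
    ∀ Δ : Set ℝ, MeasurableSet Δ → UnifContAt F Δ := by
  rintro _ - s hs hdisj rfl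
  have hmass (x : H) : ν x Λ = ENNReal.ofReal (‖x‖ ^ 2) := by
    rw [hν x Λ hΛ.isClosed.measurableSet, hEΛ, one_apply_eq_self,
      ← RCLike.re_to_complex, inner_self_eq_norm_sq]
  set G : ℕ → Set ℝ := fun n => ⋃ i, s (i + n)
  have hG (n : ℕ) : MeasurableSet (G n) := .iUnion fun _ => hs _
  have hμG (n : ℕ) : μ (G n) = fun lam => (P lam).real (G n) :=
    funext fun lam => hμP lam _ (hG n)
  have hunif : TendstoUniformlyOn (fun n lam => (P lam).real (G n)) 0 atTop Λ :=
    tendstoUniformlyOn_measureReal_iUnion_nat_add hΛ hs hdisj fun n => hμG n ▸ hfeller _ (hG n)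
  have htail : Tendsto (fun n => F (G n)) atTop (𝓝 0) := by
    refine NormedAddGroup.tendsto_nhds_zero.2 fun ε hε => ?_
    filter_upwards [Metric.tendstoUniformlyOn_iff.1 hunif (ε / 2) (half_pos hε)] with n hn
    refine lt_of_le_of_lt ?_ (half_lt_self hε)
    refine ContinuousLinearMap.norm_le_of_re_inner_eq_setIntegral (hF.nonneg (hG n)) hmass
      (hrep _ (hG n)) (half_pos hε).le fun lam hlam => ?_
    simpa [hμG] using (hn lam hlam).le
  have hlim := (tendsto_const_nhds (x := F (⋃ i, s i))).sub htail
  rw [sub_zero] at hlim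
  exact hlim.congr fun n => by rw [hF.map_iUnion_eq_sum_add hs hdisj n, add_sub_cancel_right]

/-- a commutative real POVM which is the smearing of a PVM `E` on a compact
set `Λ` via a strong Feller Markov kernel `μ` (i.e. `λ ↦ μ Δ λ` is continuous for every
Borel `Δ`) is uniformly continuous. The representation `F Δ = ∫ μ_Δ(λ) dE_λ` is expressed
weakly: `⟨x, F(Δ) x⟩ = ∫ μ_Δ(λ) d⟨x, E(·) x⟩` for every `x`, where `ν x` is the
spectral measure `Δ ↦ ⟨x, E(Δ) x⟩` of `E` at `x`. -/
theorem unifCont_of_strong_feller_kernel (F : Set ℝ → H →L[ℂ] H) (hF : IsPOVM F)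
    (hcomm : ∀ Δ₁ Δ₂ : Set ℝ, MeasurableSet Δ₁ → MeasurableSet Δ₂ →
      F Δ₁ * F Δ₂ = F Δ₂ * F Δ₁)
    (Λ : Set ℝ) (hΛ : IsCompact Λ)
    -- the PVM `E`
    (E : Set ℝ → H →L[ℂ] H) (hE : IsPOVM E)
    (hproj : ∀ Δ : Set ℝ, MeasurableSet Δ → E Δ * E Δ = E Δ)
    (hEΛ : E Λ = 1)
    -- the spectral measures `ν x = ⟨x, E(·) x⟩`
    (ν : H → Measure ℝ)
    (hν : ∀ (x : H) (Δ : Set ℝ), MeasurableSet Δ →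
      ν x Δ = ENNReal.ofReal ((⟪x, E Δ x⟫).re))
    -- the Markov kernel `μ`
    (μ : Set ℝ → ℝ → ℝ)
    (hμmeas : ∀ Δ : Set ℝ, MeasurableSet Δ → Measurable (μ Δ))
    (P : ℝ → Measure ℝ) (hP : ∀ lam : ℝ, IsProbabilityMeasure (P lam))
    (hμP : ∀ (lam : ℝ) (Δ : Set ℝ), MeasurableSet Δ → μ Δ lam = (P lam Δ).toReal)
    -- the strong Feller property
    (hfeller : ∀ Δ : Set ℝ, MeasurableSet Δ → Continuous (μ Δ))
    -- the smearing representation `F Δ = ∫_Λ μ_Δ(λ) dE_λ`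
    (hrep : ∀ (Δ : Set ℝ), MeasurableSet Δ → ∀ x : H,
      (⟪x, F Δ x⟫).re = ∫ lam in Λ, μ Δ lam ∂(ν x)) :
    ∀ Δ : Set ℝ, MeasurableSet Δ → UnifContAt F Δ :=
  unifCont_of_strong_feller_kernel_general F hF Λ hΛ E hEΛ ν hν μ P hP hμP hfeller hrep
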